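/- Let P be a finite bounded poset with a CL-labeling λ, and let m be a maximal chain of P of length n. If the number of maximal chains covered by m in the maximal chain descent order C(P,λ) equals n − 1, then m has a descent with respect to λ at every one of its n − 1 interior elements. Moreover, if λ is polygon complete, then m has a descent at every interior element if and only if the number of maximal chains covered by m in C(P,λ) equals n − 1. -/

import Mathlib

/-- A maximal chain of a bounded poset `P`, recorded as a saturated chain
(a list of elements whose consecutive entries are covers) from `⊥` to `⊤`. -/
structure MaxChain (P : Type*) [PartialOrder P] [BoundedOrder P] where
  elems : List P
  chain' : elems.Chain' (· ⋖ ·)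
  head_bot : elems.head? = some ⊥
  last_top : elems.getLast? = some ⊤

variable {P : Type*} [PartialOrder P] [BoundedOrder P] [DecidableEq P]
variable {Λ : Type*} [PartialOrder Λ]

/-- `lab` is a chain-edge labeling: the label of edge `j` (the edge between
positions `j` and `j+1` of the chain, `0`-indexed) depends only on the
bottom part of the chain below that edge. -/
def IsChainEdgeLabeling (lab : MaxChain P → ℕ → Λ) : Prop :=
  ∀ m m' : MaxChain P, ∀ i : ℕ,
    m.elems.take (i + 1) = m'.elems.take (i + 1) → ∀ j, j < i → lab m j = lab m' j

/-- `r` is a root: a saturated chain from `⊥` to `x`. -/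
def IsRootTo (r : List P) (x : P) : Prop :=
  r.Chain' (· ⋖ ·) ∧ r.head? = some (⊥ : P) ∧ r.getLast? = some x

/-- `c` is a saturated chain from `x` to `y`. -/
def IsSatChain (c : List P) (x y : P) : Prop :=
  c.Chain' (· ⋖ ·) ∧ c.head? = some x ∧ c.getLast? = some y

/-- The maximal chain `m` lies in the rooted interval `[x,y]_r`, i.e. it begins
with the root `r` (whose last entry is `x`) and passes through `y`. -/
def InRooted (m : MaxChain P) (r : List P) (y : P) : Prop :=
  m.elems.take r.length = r ∧ y ∈ m.elems

/-- The labels of `m` weakly ascend along the edges `i, i+1, …, j-1`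
(the edges of the restriction of `m` between positions `i` and `j`). -/
def RestrAscending (lab : MaxChain P → ℕ → Λ) (m : MaxChain P) (i j : ℕ) : Prop :=
  ∀ k, i ≤ k → k + 2 ≤ j → lab m k ≤ lab m (k + 1)

/-- The restriction of the maximal chain `m` to the rooted interval `[x,y]_r`,
where `x` is the top of the root `r`. -/
def restrictChain (m : MaxChain P) (r : List P) (y : P) : List P :=
  (m.elems.take (m.elems.idxOf y + 1)).drop (r.length - 1)

/-- The label sequence of `m` along edges `i, i+1, …, j-1`. -/
def restrLabels (lab : MaxChain P → ℕ → Λ) (m : MaxChain P) (i j : ℕ) : List Λ :=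
  (List.range (j - i)).map fun k => lab m (i + k)

/-- The CL condition for the rooted interval with root `r` and top `y`:
there is an ascending maximal chain of the rooted interval, any two ascending
ones coincide, and the ascending one lexicographically strictly precedes every
other maximal chain of the rooted interval. -/
def CLAt (lab : MaxChain P → ℕ → Λ) (r : List P) (y : P) : Prop :=
  (∃ m : MaxChain P, InRooted m r y ∧
      RestrAscending lab m (r.length - 1) (m.elems.idxOf y)) ∧
  (∀ m m' : MaxChain P, InRooted m r y → InRooted m' r y →
      RestrAscending lab m (r.length - 1) (m.elems.idxOf y) →
      RestrAscending lab m' (r.length - 1) (m'.elems.idxOf y) →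
      restrictChain m r y = restrictChain m' r y) ∧
  (∀ m m' : MaxChain P, InRooted m r y → InRooted m' r y →
      RestrAscending lab m (r.length - 1) (m.elems.idxOf y) →
      restrictChain m r y ≠ restrictChain m' r y →
      List.Lex (· < ·) (restrLabels lab m (r.length - 1) (m.elems.idxOf y))
        (restrLabels lab m' (r.length - 1) (m'.elems.idxOf y)))

/-- `lab` is a CL-labeling: it is a chain-edge labeling and every rooted
interval has a unique ascending maximal chain which lexicographically strictly
precedes all other maximal chains of that rooted interval. -/
def IsCLLabeling (lab : MaxChain P → ℕ → Λ) : Prop :=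
  IsChainEdgeLabeling lab ∧
  ∀ (r : List P) (x y : P), IsRootTo r x → x < y → CLAt lab r y

/-- `m` increases by a polygon move to `m'`: they differ by a polygon over some
interval `[x,y]` (with `m' ∩ (x,y) = {w}` a single new element), the part of `m`
in `[x,y]` is ascending (hence, for a CL-labeling, it is the unique ascending
chain of the rooted interval), and `x ⋖ w ⋖ y` is a descent at `w`. -/
def PolygonMove (lab : MaxChain P → ℕ → Λ) (m m' : MaxChain P) : Prop :=
  ∃ (a c b : List P) (x w y : P),
    m.elems = a ++ x :: (c ++ y :: b) ∧
    m'.elems = a ++ x :: w :: y :: b ∧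
    c ≠ [] ∧ w ∉ c ∧
    RestrAscending lab m a.length (a.length + c.length + 1) ∧
    ¬ lab m' a.length ≤ lab m' (a.length + 1)

/-- The maximal chain descent order `C(P,λ)`: the reflexive–transitive closure
of increase by polygon moves. -/
def CDLe (lab : MaxChain P → ℕ → Λ) (m m' : MaxChain P) : Prop :=
  Relation.ReflTransGen (PolygonMove lab) m m'

/-- Strict order of the maximal chain descent order. -/
def CDLt (lab : MaxChain P → ℕ → Λ) (m m' : MaxChain P) : Prop :=
  CDLe lab m m' ∧ m ≠ m'

/-- `m'` covers `m` in the maximal chain descent order. -/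
def CDCovBy (lab : MaxChain P → ℕ → Λ) (m m' : MaxChain P) : Prop :=
  CDLt lab m m' ∧ ∀ z : MaxChain P, CDLt lab m z → ¬ CDLt lab z m'

/-- `lab` is polygon complete: every polygon move gives a cover relation. -/
def PolygonComplete (lab : MaxChain P → ℕ → Λ) : Prop :=
  ∀ m m' : MaxChain P, PolygonMove lab m m' → CDCovBy lab m m'

/-- `m` has a descent at its (interior) position `i`. -/
def DescentAt (lab : MaxChain P → ℕ → Λ) (m : MaxChain P) (i : ℕ) : Prop :=
  0 < i ∧ i + 1 < m.elems.length ∧ ¬ lab m (i - 1) ≤ lab m i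

/-- `m` has a descent at its interior element `z`. -/
def DescentElem (lab : MaxChain P → ℕ → Λ) (m : MaxChain P) (z : P) : Prop :=
  ∃ i : ℕ, m.elems[i]? = some z ∧ DescentAt lab m i

/-- `m` has a descending label sequence: a descent at every interior element. -/
def DescendingMC (lab : MaxChain P → ℕ → Λ) (m : MaxChain P) : Prop :=
  ∀ i : ℕ, 0 < i → i + 1 < m.elems.length → ¬ lab m (i - 1) ≤ lab m i

/-- `m` has an ascending (weakly increasing) label sequence. -/
def AscendingMC (lab : MaxChain P → ℕ → Λ) (m : MaxChain P) : Prop :=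
  ∀ i : ℕ, i + 3 ≤ m.elems.length → lab m i ≤ lab m (i + 1)

section Statement7Helpers

variable {lab : MaxChain P → ℕ → Λ}

theorem MaxChain.ext' {m m' : MaxChain P} (h : m.elems = m'.elems) : m = m' := by
  cases m; cases m'; cases h; rfl

theorem chain'_rel {α : Type*} {R : α → α → Prop} {l : List α} (h : l.Chain' R)
    {i : ℕ} (hi : i + 1 < l.length) : R l[i] l[i + 1] := by
  replace h := List.isChain_iff_getElem.1 h
  simpa using h i (by omega)

theorem mc_pairwise (m : MaxChain P) : m.elems.Pairwise (· < ·) := by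
  rw [← List.isChain_iff_pairwise]
  exact m.chain'.imp fun _ _ h => h.lt

theorem mc_lt (m : MaxChain P) {i j : ℕ} (hij : i < j) (hj : j < m.elems.length) :
    m.elems[i]'(by omega) < m.elems[j] := by
  have h := mc_pairwise m
  rw [List.pairwise_iff_getElem] at h
  exact h i j (by omega) hj hij

theorem mc_nodup (m : MaxChain P) : m.elems.Nodup :=
  (mc_pairwise m).imp ne_of_lt

theorem getElem_idx {α : Type*} (l : List α) {i j : ℕ} (h : i = j) (hi : i < l.length) :
    l[i] = l[j]'(by omega) := by subst h; rfl

open Classical in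
/-- The first position where the underlying chains of `m'` and `m` differ. -/
noncomputable def fdiff (m' m : MaxChain P) : ℕ :=
  if h : ∃ k, m'.elems[k]? ≠ m.elems[k]? then Nat.find h else 0

theorem fdiff_eq {m' m : MaxChain P} {a c b : List P} {x w y : P}
    (hm' : m'.elems = a ++ x :: (c ++ y :: b)) (hm : m.elems = a ++ x :: w :: y :: b)
    (hc : c ≠ []) (hw : w ∉ c) : fdiff m' m = a.length + 1 := by
  obtain ⟨ch, ct, rfl⟩ := List.exists_cons_of_ne_nil hc
  have h1 : m'.elems[a.length + 1]? = some ch := by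
    rw [hm', show a ++ x :: (ch :: ct ++ y :: b) = (a ++ [x]) ++ (ch :: (ct ++ y :: b)) by simp]
    rw [List.getElem?_append_right (by simp)]
    simp
  have h2 : m.elems[a.length + 1]? = some w := by
    rw [hm, show a ++ x :: w :: y :: b = (a ++ [x]) ++ (w :: y :: b) by simp]
    rw [List.getElem?_append_right (by simp)]
    simp
  have hne : m'.elems[a.length + 1]? ≠ m.elems[a.length + 1]? := by
    rw [h1, h2]
    intro h
    exact hw (by simp [(Option.some.inj h)])
  have hex : ∃ k, m'.elems[k]? ≠ m.elems[k]? := ⟨_, hne⟩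
  unfold fdiff
  rw [dif_pos hex, Nat.find_eq_iff]
  refine ⟨hne, fun k hk => ?_⟩
  rw [not_ne_iff]
  have e1 : m'.elems[k]? = (a ++ [x])[k]? := by
    rw [hm', show a ++ x :: (ch :: ct ++ y :: b) = (a ++ [x]) ++ (ch :: (ct ++ y :: b)) by simp]
    rw [List.getElem?_append, if_pos (by simp; omega)]
  have e2 : m.elems[k]? = (a ++ [x])[k]? := by
    rw [hm, show a ++ x :: w :: y :: b = (a ++ [x]) ++ (w :: y :: b) by simp]
    rw [List.getElem?_append, if_pos (by simp; omega)]
  rw [e1, e2]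

theorem poly_descent {m' m : MaxChain P} (h : PolygonMove lab m' m) :
    DescentAt lab m (fdiff m' m) := by
  obtain ⟨a, c, b, x, w, y, hm', hm, hc, hw, hasc, hdes⟩ := h
  rw [fdiff_eq hm' hm hc hw]
  refine ⟨by omega, by rw [hm]; simp; omega, ?_⟩
  simpa using hdes

theorem poly_ne {m' m : MaxChain P} (h : PolygonMove lab m' m) : m' ≠ m := by
  obtain ⟨a, c, b, x, w, y, hm', hm, hc, hw, -, -⟩ := h
  intro he
  rw [he, hm] at hm'
  have h2 : c ++ y :: b = w :: y :: b := by
    have := List.append_cancel_left hm'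
    simpa using this.symm
  obtain ⟨u, cu, rfl⟩ := List.exists_cons_of_ne_nil hc
  have hlen : cu = [] := by
    have hl := congrArg List.length h2
    simp only [List.length_cons, List.length_append] at hl
    rw [← List.length_eq_zero_iff]
    omega
  subst hlen
  simp at h2
  exact hw (by simp [h2])

theorem cov_poly {m' m : MaxChain P} (h : CDCovBy lab m' m) : PolygonMove lab m' m := by
  obtain ⟨⟨hle, hne⟩, hmin⟩ := h
  rcases Relation.ReflTransGen.cases_head hle with he | ⟨z, hz, hzm⟩
  · exact absurd he hne
  by_cases hz2 : z = m
  · exact hz2 ▸ hz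
  exact absurd ⟨hzm, hz2⟩ (hmin z ⟨Relation.ReflTransGen.single hz, poly_ne hz⟩)

theorem poly_unique (hCL : IsCLLabeling lab) {m m1 m2 : MaxChain P}
    {a c1 c2 b : List P} {x w y : P}
    (hm : m.elems = a ++ x :: w :: y :: b)
    (h1 : m1.elems = a ++ x :: (c1 ++ y :: b))
    (h2 : m2.elems = a ++ x :: (c2 ++ y :: b))
    (asc1 : RestrAscending lab m1 a.length (a.length + c1.length + 1))
    (asc2 : RestrAscending lab m2 a.length (a.length + c2.length + 1)) :
    m1 = m2 := by
  have hinf : [x, w, y] <:+: m.elems := ⟨a, b, by simp [hm]⟩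
  have hch := m.chain'.infix hinf
  obtain ⟨hxw, hch2⟩ := List.isChain_cons_cons.1 hch
  obtain ⟨hwy, -⟩ := List.isChain_cons_cons.1 hch2
  have hxy : x < y := hxw.1.trans hwy.1
  have hrlen : (a ++ [x]).length = a.length + 1 := by simp
  have hroot : IsRootTo (a ++ [x]) x := by
    refine ⟨?_, ?_, List.getLast?_concat⟩
    · exact m.chain'.prefix ⟨w :: y :: b, by simp [hm]⟩
    · have hh : (a ++ [x]).head? = m.elems.head? := by
        rw [hm]; cases a <;> simp
      rw [hh, m.head_bot]
  obtain ⟨-, huniq, -⟩ := hCL.2 (a ++ [x]) x y hroot hxy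
  have H : ∀ (mi : MaxChain P) (ci : List P), mi.elems = a ++ x :: (ci ++ y :: b) →
      InRooted mi (a ++ [x]) y ∧ mi.elems.idxOf y = a.length + ci.length + 1 ∧
      restrictChain mi (a ++ [x]) y = x :: (ci ++ [y]) := by
    intro mi ci hi
    have hnd := mc_nodup mi
    rw [hi, show a ++ x :: (ci ++ y :: b) = (a ++ x :: ci) ++ (y :: b) by simp] at hnd
    have hidx : mi.elems.idxOf y = a.length + ci.length + 1 := by
      rw [hi, show a ++ x :: (ci ++ y :: b) = (a ++ x :: ci) ++ (y :: b) by simp]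
      have hy : y ∉ a ++ x :: ci := by
        intro hmem
        exact (List.nodup_append.1 hnd).2.2 y hmem y (by simp) rfl
      rw [List.idxOf_append, if_neg hy]
      simp
      omega
    refine ⟨⟨?_, by simp [hi]⟩, hidx, ?_⟩
    · rw [hi, hrlen, show a ++ x :: (ci ++ y :: b) = (a ++ [x]) ++ (ci ++ y :: b) by simp]
      rw [show (a ++ [x]).length = a.length + 1 by simp] at * 
      exact List.take_left' (by simp)
    · rw [restrictChain, hidx, hrlen]
      simp only [Nat.add_sub_cancel]
      rw [hi, show a ++ x :: (ci ++ y :: b) = (a ++ (x :: ci ++ [y])) ++ b by simp]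
      rw [List.take_left' (by simp; omega), List.drop_left' rfl]
      simp
  obtain ⟨ir1, idx1, rc1⟩ := H m1 c1 h1
  obtain ⟨ir2, idx2, rc2⟩ := H m2 c2 h2
  have key := huniq m1 m2 ir1 ir2
    (by rw [idx1, hrlen]; simpa using asc1)
    (by rw [idx2, hrlen]; simpa using asc2)
  rw [rc1, rc2] at key
  have hc12 : c1 = c2 := by
    injection key with _ key'
    exact List.append_cancel_right key'
  exact MaxChain.ext' (by rw [h1, h2, hc12])


theorem head?_append_cons_eq {α : Type*} (a : List α) (x : α) (t t' : List α) :
    (a ++ x :: t).head? = (a ++ x :: t').head? := by cases a <;> simp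

theorem exists_poly (hCL : IsCLLabeling lab) {m : MaxChain P} {i : ℕ}
    (hdes : DescentAt lab m i) : ∃ m', PolygonMove lab m' m ∧ fdiff m' m = i := by
  obtain ⟨hi0, hilen, hd⟩ := hdes
  obtain ⟨i0, rfl⟩ : ∃ i0, i = i0 + 1 := ⟨i - 1, by omega⟩
  simp only [Nat.add_sub_cancel] at hd
  have h1 : i0 < m.elems.length := by omega
  have h2 : i0 + 1 < m.elems.length := by omega
  obtain ⟨a, x, w, y, b, hm, halen⟩ :
      ∃ a x w y b, m.elems = a ++ x :: w :: y :: b ∧ a.length = i0 := by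
    refine ⟨m.elems.take i0, m.elems[i0], m.elems[i0 + 1], m.elems[i0 + 2],
      m.elems.drop (i0 + 3), ?_, by simp; omega⟩
    conv_lhs => rw [← List.take_append_drop i0 m.elems]
    congr 1
    rw [List.drop_eq_getElem_cons h1, List.drop_eq_getElem_cons h2,
      List.drop_eq_getElem_cons (show i0 + 2 < m.elems.length from hilen)]
  -- cover relations inside the window
  have hsuf : List.Chain' (· ⋖ ·) (x :: w :: y :: b) := m.chain'.infix ⟨a, [], by simp [hm]⟩
  obtain ⟨hxw, hsuf2⟩ := List.isChain_cons_cons.1 hsuf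
  obtain ⟨hwy, hyb⟩ := List.isChain_cons_cons.1 hsuf2
  have hxy : x < y := hxw.lt.trans hwy.lt
  -- the root
  have hrlen : (a ++ [x]).length = i0 + 1 := by simp; omega
  have hroot : IsRootTo (a ++ [x]) x := by
    refine ⟨m.chain'.prefix ⟨w :: y :: b, by simp [hm]⟩, ?_, List.getLast?_concat⟩
    have hh : (a ++ [x]).head? = m.elems.head? := by
      rw [hm]
      exact head?_append_cons_eq a x [] (w :: y :: b)
    rw [hh, m.head_bot]
  obtain ⟨⟨m₀, ⟨h₀take, h₀mem⟩, h₀asc⟩, -, -⟩ := hCL.2 (a ++ [x]) x y hroot hxy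
  rw [hrlen] at h₀take
  -- index of y in m₀
  have hjlen : m₀.elems.idxOf y < m₀.elems.length := List.idxOf_lt_length_iff.2 h₀mem
  set j := m₀.elems.idxOf y with hjdef
  have hjy : m₀.elems[j] = y := List.getElem_idxOf hjlen
  have hilen₀ : i0 + 1 ≤ m₀.elems.length := by
    have := congrArg List.length h₀take
    simp at this
    omega
  have hix : m₀.elems[i0]'(by omega) = x := by
    have h' : (m₀.elems.take (i0 + 1))[i0]'(by simp; omega) = x := by
      simp only [h₀take]
      exact List.getElem_concat_length halen.symm _
    rw [List.getElem_take] at h'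
    exact h'
  have hij : i0 + 1 ≤ j := by
    by_contra hcon
    push_neg at hcon
    rcases lt_or_eq_of_le (show j ≤ i0 by omega) with h' | h'
    · have := mc_lt m₀ h' (by omega)
      rw [hjy, hix] at this
      exact lt_asymm hxy this
    · have hjy' : m₀.elems[i0]'(by omega) = y :=
        (getElem_idx m₀.elems h'.symm (by omega)).trans hjy
      have hxyeq : x = y := by rw [← hix]; exact hjy'
      exact hxy.ne hxyeq
  have hij2 : i0 + 1 < j := by
    rcases Nat.lt_or_ge (i0 + 1) j with h' | h'
    · exact h'
    · exfalso
      have hchr := chain'_rel m₀.chain' (i := i0) (by omega)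
      rw [hix, show m₀.elems[i0 + 1]'(by omega) = y from
        (getElem_idx m₀.elems (show i0 + 1 = j by omega) (by omega)).trans hjy] at hchr
      exact hchr.2 hxw.lt hwy.lt
  -- the new middle part c
  set c := (m₀.elems.take j).drop (i0 + 1) with hcdef
  have hclen : c.length = j - (i0 + 1) := by
    rw [hcdef]
    simp
    omega
  have hcne : c ≠ [] := by
    intro h
    rw [h] at hclen
    simp at hclen
    omega
  have htakej : m₀.elems.take j = (a ++ [x]) ++ c := by
    conv_lhs => rw [← List.take_append_drop (i0 + 1) (m₀.elems.take j)]
    congr 1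
    rw [List.take_take, min_eq_left hij2.le]
    exact h₀take
  have htakej1 : m₀.elems.take (j + 1) = (a ++ [x]) ++ c ++ [y] := by
    rw [List.take_succ, htakej]
    simp [List.getElem?_eq_getElem hjlen, hjy]
  -- w is not in c
  have hwc : w ∉ c := by
    intro hwc
    obtain ⟨t, ht, hct⟩ := List.mem_iff_getElem.1 hwc
    have htlen : t < j - (i0 + 1) := by rw [← hclen]; exact ht
    have hct' : m₀.elems[i0 + 1 + t]'(by omega) = w := by
      have e3 : ((m₀.elems.take j).drop (i0 + 1))[t]'(by simp; omega) = w := by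
        simp only [← hcdef]
        exact hct
      have e2 : ((m₀.elems.take j).drop (i0 + 1))[t]'(by simp; omega)
          = (m₀.elems.take j)[i0 + 1 + t]'(by simp; omega) := List.getElem_drop
      have e1 : (m₀.elems.take j)[i0 + 1 + t]'(by simp; omega)
          = m₀.elems[i0 + 1 + t]'(by omega) := List.getElem_take
      exact e1.symm.trans (e2.symm.trans e3)
    by_cases ht0 : t = 0
    · subst ht0
      have hw' : m₀.elems[i0 + 1]'(by omega) = w :=
        (getElem_idx m₀.elems (show i0 + 1 = i0 + 1 + 0 by omega) (by omega)).trans hct'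
      by_cases hj1 : j = i0 + 2
      · -- c = [w]; prefix of m₀ agrees with m up to i0 + 3; ascent contradicts descent
        have hc1 : c = [w] := by
          have hlen1 : c.length = 1 := by omega
          obtain ⟨u, hu⟩ := List.length_eq_one_iff.1 hlen1
          simp only [hu] at hct
          simp at hct
          rw [hu, hct]
        have hctake : m₀.elems.take (i0 + 3) = m.elems.take (i0 + 3) := by
          rw [show i0 + 3 = j + 1 from by omega, htakej1, hc1, hm]
          rw [show a ++ x :: w :: y :: b = (a ++ [x] ++ [w] ++ [y]) ++ b by simp]
          rw [List.take_left' (by simp; omega)]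
        have hlabs := hCL.1 m₀ m (i0 + 2) hctake
        have hasc0 := h₀asc i0 (by rw [hrlen]; omega) (by omega)
        rw [hlabs i0 (by omega), hlabs (i0 + 1) (by omega)] at hasc0
        exact hd hasc0
      · have h1' : m₀.elems[i0 + 1]'(by omega) < m₀.elems[i0 + 2]'(by omega) :=
          mc_lt m₀ (by omega) (by omega)
        have h2' : m₀.elems[i0 + 2]'(by omega) < y := by
          have h := mc_lt m₀ (show i0 + 2 < j by omega) hjlen
          rwa [hjy] at h
        rw [hw'] at h1'
        exact hwy.2 h1' h2'
    · have h1' : m₀.elems[i0 + 1]'(by omega) < m₀.elems[i0 + 1 + t]'(by omega) :=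
        mc_lt m₀ (by omega) (by omega)
      have h0' : x < m₀.elems[i0 + 1]'(by omega) := by
        have h := mc_lt m₀ (show i0 < i0 + 1 by omega) (by omega)
        rwa [hix] at h
      rw [hct'] at h1'
      exact hxw.2 h0' h1'
  -- build the new maximal chain
  have hE' : a ++ x :: (c ++ y :: b) = m₀.elems.take (j + 1) ++ b := by
    rw [htakej1]; simp
  have hjlen1 : (m₀.elems.take (j + 1)).length = j + 1 := by simp; omega
  have hchain' : List.Chain' (· ⋖ ·) (a ++ x :: (c ++ y :: b)) := by
    rw [hE']
    apply List.isChain_append.2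
    refine ⟨m₀.chain'.prefix (List.take_prefix _ _), hyb.tail, ?_⟩
    intro p hp q hq
    rw [htakej1, List.getLast?_concat] at hp
    simp at hp
    subst hp
    exact (List.isChain_cons.1 hyb).1 q hq
  have hhead : (a ++ x :: (c ++ y :: b)).head? = some ⊥ := by
    rw [head?_append_cons_eq a x (c ++ y :: b) (w :: y :: b), ← hm]
    exact m.head_bot
  have hlast : (a ++ x :: (c ++ y :: b)).getLast? = some ⊤ := by
    rw [show a ++ x :: (c ++ y :: b) = (a ++ x :: c) ++ y :: b by simp,
      List.getLast?_append_cons]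
    have hmt := m.last_top
    rw [hm, show a ++ x :: w :: y :: b = (a ++ [x, w]) ++ y :: b by simp,
      List.getLast?_append_cons] at hmt
    exact hmt
  have hjeq : a.length + c.length + 1 = j := by omega
  refine ⟨⟨a ++ x :: (c ++ y :: b), hchain', hhead, hlast⟩,
    ⟨a, c, b, x, w, y, rfl, hm, hcne, hwc, ?_, ?_⟩, ?_⟩
  · -- ascending
    intro k hk1 hk2
    have htk : (⟨a ++ x :: (c ++ y :: b), hchain', hhead, hlast⟩ : MaxChain P).elems.take (j + 1)
        = m₀.elems.take (j + 1) := by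
      show (a ++ x :: (c ++ y :: b)).take (j + 1) = _
      rw [hE', List.take_left' hjlen1]
    have hlabs := hCL.1 _ m₀ j htk
    rw [hlabs k (by omega), hlabs (k + 1) (by omega)]
    exact h₀asc k (by rw [hrlen]; omega) (by omega)
  · rw [halen]
    exact hd
  · rw [fdiff_eq rfl hm hcne hwc, halen]

end Statement7Helpers

/-- for a maximal chain `m` of length `n`, if the number of
maximal chains covered by `m` in the maximal chain descent order is `n - 1`,
then `m` has a descent at every interior element; if `lab` is polygon
complete, the converse holds as well. -/
theorem statement7 [Fintype P] (lab : MaxChain P → ℕ → Λ) (hCL : IsCLLabeling lab)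
    (m : MaxChain P) (n : ℕ) (hn : m.elems.length = n + 1) :
    ({m' : MaxChain P | CDCovBy lab m' m}.ncard = n - 1 → DescendingMC lab m) ∧
      (PolygonComplete lab →
        (DescendingMC lab m ↔
          {m' : MaxChain P | CDCovBy lab m' m}.ncard = n - 1)) := by
  classical
  have hCS : {m' : MaxChain P | CDCovBy lab m' m} ⊆ {m' : MaxChain P | PolygonMove lab m' m} :=
    fun m' h => cov_poly h
  have hinj : Set.InjOn (fun m' => fdiff m' m) {m' : MaxChain P | PolygonMove lab m' m} := by
    intro m1 h1 m2 h2 heq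
    obtain ⟨a1, c1, b1, x1, w1, y1, e1, f1, g1, i1, asc1, -⟩ := h1
    obtain ⟨a2, c2, b2, x2, w2, y2, e2, f2, g2, i2, asc2, -⟩ := h2
    simp only at heq
    rw [fdiff_eq e1 f1 g1 i1, fdiff_eq e2 f2 g2 i2] at heq
    have hlen : a1.length = a2.length := by omega
    have ha : a1 = a2 := by
      have hff := f1.symm.trans f2
      have h1' : a1 = (a1 ++ x1 :: w1 :: y1 :: b1).take a1.length := (List.take_left' rfl).symm
      rw [h1', hff, hlen, List.take_left' rfl]
    subst ha
    have hrest := List.append_cancel_left (f1.symm.trans f2)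
    obtain ⟨hx, hw', hy, hb⟩ : x1 = x2 ∧ w1 = w2 ∧ y1 = y2 ∧ b1 = b2 := by
      simpa using hrest
    subst hx; subst hw'; subst hy; subst hb
    exact poly_unique hCL f1 e1 e2 asc1 asc2
  have hmaps : ∀ m' ∈ {m' : MaxChain P | PolygonMove lab m' m},
      fdiff m' m ∈ (↑(Finset.Ico 1 n) : Set ℕ) := by
    intro m' h
    obtain ⟨h0, hlt, -⟩ := poly_descent h
    simp only [Finset.coe_Ico, Set.mem_Ico]
    rw [hn] at hlt
    omega
  have part1 : {m' : MaxChain P | CDCovBy lab m' m}.ncard = n - 1 → DescendingMC lab m := by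
    intro hcard i hi0 hilen
    by_contra hcon
    have hn2 : 2 ≤ n := by omega
    have hi1 : i < n := by omega
    have hle : {m' : MaxChain P | CDCovBy lab m' m}.ncard ≤ ((Finset.Ico 1 n).erase i).card := by
      rw [← Set.ncard_coe_finset]
      refine Set.ncard_le_ncard_of_injOn (fun m' => fdiff m' m) ?_ (hinj.mono hCS)
        (Set.toFinite _)
      intro m' hm'
      have hpm := hCS hm'
      have hdd := poly_descent hpm
      have hico := hmaps m' hpm
      simp only [Finset.coe_erase, Set.mem_diff, Finset.mem_coe, Set.mem_singleton_iff]
      refine ⟨by simpa using hico, ?_⟩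
      intro he
      exact (he ▸ hdd.2.2) hcon
    rw [hcard, Finset.card_erase_of_mem (by simp [Finset.mem_Ico]; omega), Nat.card_Ico] at hle
    omega
  refine ⟨part1, fun hpc => ⟨fun hdesc => ?_, part1⟩⟩
  have hCeq : {m' : MaxChain P | CDCovBy lab m' m} = {m' : MaxChain P | PolygonMove lab m' m} :=
    Set.Subset.antisymm hCS (fun m' h => hpc m' m h)
  rw [hCeq]
  have himg : (fun m' => fdiff m' m) '' {m' : MaxChain P | PolygonMove lab m' m}
      = (↑(Finset.Ico 1 n) : Set ℕ) := by
    apply Set.Subset.antisymm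
    · rintro _ ⟨m', hm', rfl⟩
      exact hmaps m' hm'
    · rintro i hi
      simp only [Finset.coe_Ico, Set.mem_Ico] at hi
      have hdd : DescentAt lab m i := ⟨hi.1, by omega, hdesc i hi.1 (by omega)⟩
      obtain ⟨m', hp, hf⟩ := exists_poly hCL hdd
      exact ⟨m', hp, hf⟩
  have hni := Set.ncard_image_of_injOn hinj
  rw [himg, Set.ncard_coe_finset, Nat.card_Ico] at hni
  exact hni.symm
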